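/- Let F = {w ∈ ℂⁿ : |ã_i^*(x₀ + w)| ≤ b_i, 1 ≤ i ≤ m} where ã_i^* x₀ = b_i > 0 for all i. Then cone(F) = ⋂_{i=1}^m {w ∈ ℂⁿ : Re(ã_i^* w) ≤ 0}. -/

import Mathlib

open Filter Topology
open scoped InnerProductSpace

/-!
A constraint `‖b + ⟪a, w⟫‖ ≤ b` forces `Re ⟪a, w⟫ ≤ 0`, and the intersection of these closed
half-spaces is a closed cone, which gives one inclusion. Conversely, if `Re ⟪aᵢ, v⟫ < 0` for all
`i`, then `‖bᵢ + t ⟪aᵢ, v⟫‖² = bᵢ² + t (2 bᵢ Re ⟪aᵢ, v⟫ + t ‖⟪aᵢ, v⟫‖²) ≤ bᵢ²` for all small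
`t > 0`, so `t • v ∈ F` and `v` lies in the cone over `F`. Every `w` in the intersection of the
half-spaces is the limit of `w - ε • x₀` as `ε → 0⁺`, and these points satisfy the strict
inequalities because `Re ⟪aᵢ, x₀⟫ = bᵢ > 0`.
-/

namespace Complex

theorem re_nonpos_of_norm_ofReal_add_le {b : ℝ} {z : ℂ} (h : ‖(b : ℂ) + z‖ ≤ b) : z.re ≤ 0 := by
  have := (re_le_norm ((b : ℂ) + z)).trans h
  simp only [add_re, ofReal_re] at this
  linarith

theorem norm_ofReal_add_real_smul_le {b t : ℝ} {z : ℂ} (hb : 0 ≤ b) (ht : 0 ≤ t)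
    (htz : t * normSq z ≤ -2 * b * z.re) : ‖(b : ℂ) + t • z‖ ≤ b := by
  have hsq : ‖(b : ℂ) + t • z‖ ^ 2 = b ^ 2 + t * (2 * b * z.re + t * normSq z) := by
    rw [Complex.sq_norm, normSq_apply, normSq_apply]
    simp only [add_re, add_im, ofReal_re, ofReal_im, real_smul, mul_re, mul_im, zero_mul,
      sub_zero, zero_add]
    ring
  refine (pow_le_pow_iff_left₀ (norm_nonneg _) hb two_ne_zero).mp ?_
  rw [hsq]
  nlinarith

theorem eventually_norm_ofReal_add_real_smul_le {b : ℝ} {z : ℂ} (hb : 0 < b) (hz : z.re < 0) :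
    ∀ᶠ t in 𝓝[>] (0 : ℝ), ‖(b : ℂ) + t • z‖ ≤ b := by
  have hlim : Tendsto (fun t : ℝ => t * normSq z) (𝓝 0) (𝓝 0) := by
    simpa using (continuous_mul_const (normSq z)).tendsto 0
  have hsmall : ∀ᶠ t in 𝓝 (0 : ℝ), t * normSq z < -2 * b * z.re :=
    hlim.eventually (gt_mem_nhds (by nlinarith))
  filter_upwards [nhdsWithin_le_nhds hsmall, self_mem_nhdsWithin] with t htz ht
  exact norm_ofReal_add_real_smul_le hb.le (le_of_lt ht) htz.le

end Complex

section PhaseMax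

variable {E ι : Type*} [NormedAddCommGroup E] [InnerProductSpace ℂ E]
  {x₀ : E} {a : ι → E} {b : ι → ℝ}

theorem re_inner_nonpos_of_norm_inner_add_le (halign : ∀ i, ⟪a i, x₀⟫_ℂ = b i) {w : E}
    (hw : ∀ i, ‖⟪a i, x₀ + w⟫_ℂ‖ ≤ b i) (i : ι) : (⟪a i, w⟫_ℂ).re ≤ 0 := by
  have := hw i
  rw [inner_add_right, halign] at this
  exact Complex.re_nonpos_of_norm_ofReal_add_le this

theorem eventually_norm_inner_add_smul_le [Finite ι] (hb : ∀ i, 0 < b i)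
    (halign : ∀ i, ⟪a i, x₀⟫_ℂ = b i) {v : E} (hv : ∀ i, (⟪a i, v⟫_ℂ).re < 0) :
    ∀ᶠ t in 𝓝[>] (0 : ℝ), ∀ i, ‖⟪a i, x₀ + t • v⟫_ℂ‖ ≤ b i := by
  refine eventually_all.mpr fun i => ?_
  simp only [inner_add_right, halign, inner_smul_right_eq_smul]
  exact Complex.eventually_norm_ofReal_add_real_smul_le (hb i) (hv i)

theorem isClosed_iInter_re_inner_nonpos (a : ι → E) :
    IsClosed (⋂ i, {w : E | (⟪a i, w⟫_ℂ).re ≤ 0}) :=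
  isClosed_iInter fun i =>
    isClosed_le (Complex.continuous_re.comp (innerSL ℂ (a i)).continuous) continuous_const

theorem mem_closure_setOf_re_inner_neg (hx₀ : ∀ i, 0 < (⟪a i, x₀⟫_ℂ).re) {w : E}
    (hw : ∀ i, (⟪a i, w⟫_ℂ).re ≤ 0) : w ∈ closure {v : E | ∀ i, (⟪a i, v⟫_ℂ).re < 0} := by
  have hlim : Tendsto (fun ε : ℝ => w - ε • x₀) (𝓝[>] 0) (𝓝 w) := by
    have : Tendsto (fun ε : ℝ => w - ε • x₀) (𝓝 0) (𝓝 (w - (0 : ℝ) • x₀)) :=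
      (continuous_const.sub (continuous_id.smul continuous_const)).tendsto 0
    simpa using this.mono_left nhdsWithin_le_nhds
  refine mem_closure_of_tendsto hlim ?_
  filter_upwards [self_mem_nhdsWithin] with ε hε i
  have : (⟪a i, w - ε • x₀⟫_ℂ).re = (⟪a i, w⟫_ℂ).re - ε * (⟪a i, x₀⟫_ℂ).re := by
    simp [inner_smul_right_eq_smul]
  rw [this]
  nlinarith [hw i, hx₀ i, Set.mem_Ioi.mp hε]

end PhaseMax

/-- Lemma 3: the closed conical hull of the PhaseMax feasible set
`F = {w : |ãᵢ*(x₀+w)| ≤ bᵢ ∀ i}` (with `ãᵢ* x₀ = bᵢ > 0`) equals the intersection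
of the half-spaces `{w : Re(ãᵢ* w) ≤ 0}`. -/
theorem stmt5 {n m : ℕ} (x₀ : EuclideanSpace ℂ (Fin n))
    (ta : Fin m → EuclideanSpace ℂ (Fin n)) (b : Fin m → ℝ)
    (hb : ∀ i, 0 < b i)
    (halign : ∀ i, (inner ℂ (ta i) x₀ : ℂ) = (b i : ℂ))
    (F : Set (EuclideanSpace ℂ (Fin n)))
    (hF : F = {w | ∀ i, ‖(inner ℂ (ta i) (x₀ + w) : ℂ)‖ ≤ b i}) :
    closure {x | ∃ r : ℝ, 0 ≤ r ∧ ∃ w ∈ F, x = r • w}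
      = ⋂ i, {w : EuclideanSpace ℂ (Fin n) | ((inner ℂ (ta i) w : ℂ)).re ≤ 0} := by
  subst hF
  refine subset_antisymm (closure_minimal ?_ (isClosed_iInter_re_inner_nonpos ta)) ?_
  · rintro _ ⟨r, hr, w, hw, rfl⟩
    refine Set.mem_iInter.mpr fun i => ?_
    change (inner ℂ (ta i) (r • w)).re ≤ 0
    rw [inner_smul_right_eq_smul, Complex.real_smul, Complex.re_ofReal_mul]
    exact mul_nonpos_of_nonneg_of_nonpos hr (re_inner_nonpos_of_norm_inner_add_le halign hw i)
  · intro w hw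
    have hx₀ : ∀ i, 0 < (inner ℂ (ta i) x₀ : ℂ).re := fun i => by simpa [halign] using hb i
    refine closure_mono ?_ (mem_closure_setOf_re_inner_neg hx₀ (by simpa using hw))
    intro v hv
    obtain ⟨t, hvt, ht⟩ := ((eventually_norm_inner_add_smul_le hb halign hv).and
      self_mem_nhdsWithin).exists
    refine ⟨t⁻¹, inv_nonneg.mpr ht.le, t • v, hvt, ?_⟩
    rw [smul_smul, inv_mul_cancel₀ ht.ne', one_smul]
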